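/- Let n ≥ 2 and let f ∈ ℂ[x₀,…,xₙ] be homogeneous of degree d such that V = V(f) ⊆ ℙⁿ has only isolated singularities, and let p = (1:0:⋯:0) be a singular point of V. Let ρ₁,…,ρ_m ∈ R^{n+1} be a system of generators of the R-module Syz(J_f) of Jacobian syzygies of f, and let M_f be the (n+1)×m matrix over R whose j-th column is ρⱼ. Set g(y₁,…,yₙ) = f(1,y₁,…,yₙ). Then g belongs to the ideal (g₁,…,gₙ) in the localization of ℂ[y₁,…,yₙ] at the maximal ideal (y₁,…,yₙ) if and only if the complex matrix M_f(p), obtained by evaluating every entry of M_f at (1,0,…,0), is nonzero (equivalently, has rank ≥ 1; equivalently, some generator ρⱼ has an entry not vanishing at p). -/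

import Mathlib

/-!
A syzygy `A` of the Jacobian ideal is a vector field `∑ Aᵢ ∂ᵢ` annihilating `f`. In the chart
`x₀ = 1` it becomes, by Euler's identity, a vector field `D` on `ℂⁿ` with `D g = -d A₀ g`, where
`g = f(1, y)`; since `D g ∈ (g₁, …, gₙ)`, a syzygy with `A₀(p) ≠ 0` gives Saito's condition, and
conversely a Saito relation `u g = ∑ bⱼ gⱼ` homogenizes to a syzygy with `A₀(p) = u(0) ≠ 0`.
The remaining components `Aⱼ₊₁(p) = D(yⱼ)(0)` always vanish: `D` preserves the Tjurina ideal
`(g, g₁, …, gₙ)`, hence (Seidenberg) its radical, hence by the Nullstellensatz the ideal of its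
zero locus, which is finite because `V` has isolated singularities; a vector field preserving the
ideal of a finite set vanishes at each of its points. So `M_f(p) ≠ 0` exactly when some generator
has `ρⱼ₀(p) ≠ 0`.
-/

open MvPolynomial

noncomputable section

/-- Dehomogenization with respect to `x₀`: substitute `x₀ = 1`, `xᵢ = yᵢ`. -/
def deh (n : ℕ) : MvPolynomial (Fin (n + 1)) ℂ →ₐ[ℂ] MvPolynomial (Fin n) ℂ :=
  aeval (fun i => Fin.cases 1 (fun j => X j) i)

/-- The point `(1:0:⋯:0)`. -/
def pt (n : ℕ) : Fin (n + 1) → ℂ := fun i => if i = 0 then 1 else 0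

/-- Saito's local condition at the origin: `g` lies in the ideal generated by its partial
derivatives in the localization of `ℂ[y₁,…,yₙ]` at the maximal ideal `(y₁,…,yₙ)`;
equivalently, `u·g ∈ (g₁,…,gₙ)` for some polynomial `u` with `u(0) ≠ 0`. -/
def SaitoQH {n : ℕ} (g : MvPolynomial (Fin n) ℂ) : Prop :=
  ∃ u : MvPolynomial (Fin n) ℂ, eval (0 : Fin n → ℂ) u ≠ 0 ∧
    u * g ∈ Ideal.span (Set.range fun j : Fin n => pderiv j g)

namespace Derivation

variable {R A : Type*} [CommSemiring R] [CommRing A] [Algebra R A]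

theorem map_mem_span_of_forall_mem {D : Derivation R A A} {S : Set A}
    (hS : ∀ s ∈ S, D s ∈ Ideal.span S) {x : A} (hx : x ∈ Ideal.span S) :
    D x ∈ Ideal.span S := by
  induction hx using Submodule.span_induction with
  | mem s hs => exact hS s hs
  | zero => simp
  | add x y _ _ hx hy => simpa using add_mem hx hy
  | smul a x hx hDx =>
    rw [smul_eq_mul, leibniz, smul_eq_mul, smul_eq_mul]
    exact add_mem (Ideal.mul_mem_left _ _ hDx) (Ideal.mul_mem_right _ _ hx)

variable [Algebra ℚ A]

theorem pow_mul_pow_add_two_mem {D : Derivation R A A} {I : Ideal A}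
    (hI : ∀ x ∈ I, D x ∈ I) {a : A} {j i : ℕ} (h : a ^ (j + 1) * D a ^ i ∈ I) :
    a ^ j * D a ^ (i + 2) ∈ I := by
  have key : D a * D (a ^ (j + 1) * D a ^ i) =
      (j + 1 : ℕ) * (a ^ j * D a ^ (i + 2)) + i * D (D a) * (a ^ (j + 1) * D a ^ i) := by
    rcases i with _ | i
    · simp [leibniz_pow]; ring
    · simp [leibniz, leibniz_pow]; ring
  have hmem : ((j + 1 : ℕ) : A) * (a ^ j * D a ^ (i + 2)) ∈ I := by
    have := I.mul_mem_left (D a) (hI _ h)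
    rw [key] at this
    simpa using I.sub_mem this (I.mul_mem_left (i * D (D a)) h)
  have hunit : algebraMap ℚ A ((j + 1 : ℕ) : ℚ)⁻¹ * ((j + 1 : ℕ) : A) = 1 := by
    rw [← _root_.map_natCast (algebraMap ℚ A), ← map_mul, inv_mul_cancel₀ (by positivity),
      map_one]
  have := I.mul_mem_left (algebraMap ℚ A ((j + 1 : ℕ) : ℚ)⁻¹) hmem
  rwa [← mul_assoc, hunit, one_mul] at this

theorem map_mem_radical {D : Derivation R A A} {I : Ideal A} (hI : ∀ x ∈ I, D x ∈ I) {a : A}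
    (ha : a ∈ I.radical) : D a ∈ I.radical := by
  obtain ⟨N, hN⟩ := ha
  have step : ∀ k ≤ N, a ^ (N - k) * D a ^ (2 * k) ∈ I := by
    intro k
    induction k with
    | zero => simpa using hN
    | succ k ih =>
      intro hk
      have := pow_mul_pow_add_two_mem hI (j := N - (k + 1)) (i := 2 * k)
        (by rw [show N - (k + 1) + 1 = N - k by omega]; exact ih (by omega))
      rwa [show 2 * k + 2 = 2 * (k + 1) by ring] at this
  exact ⟨2 * N, by simpa using step N le_rfl⟩

end Derivation

namespace MvPolynomial

section CommRing

variable {R σ : Type*} [CommRing R]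

theorem pderiv_pderiv_comm (i j : σ) (P : MvPolynomial σ R) :
    pderiv i (pderiv j P) = pderiv j (pderiv i P) := by
  classical
  suffices h : ⁅pderiv i, pderiv j⁆ = (0 : Derivation R (MvPolynomial σ R) (MvPolynomial σ R)) by
    have := congr($h P)
    rwa [Derivation.commutator_apply, Derivation.zero_apply, sub_eq_zero] at this
  refine derivation_ext fun k => ?_
  simp only [Derivation.commutator_apply, pderiv_X, Pi.single_apply]
  split_ifs <;> simp

theorem IsHomogeneous.eval_smul {P : MvPolynomial σ R} {e : ℕ} (hP : P.IsHomogeneous e) (a : R)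
    (x : σ → R) : eval (a • x) P = a ^ e * eval x P := by
  rw [eval_eq, eval_eq, Finset.mul_sum]
  refine Finset.sum_congr rfl fun s hs => ?_
  have hdeg : ∑ k ∈ s.support, s k = e := by
    simpa [Finsupp.weight_apply, Finsupp.sum] using hP (mem_support_iff.mp hs)
  simp only [Pi.smul_apply, smul_eq_mul, mul_pow, Finset.prod_mul_distrib,
    Finset.prod_pow_eq_pow_sum, hdeg]
  ring

theorem IsHomogeneous.eval_eq_zero_of_forall_eval_pderiv_eq_zero [Fintype σ]
    [NoZeroSMulDivisors ℕ R] {P : MvPolynomial σ R} {e : ℕ} (hP : P.IsHomogeneous e) (he : e ≠ 0)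
    {x : σ → R} (hx : ∀ i, eval x (pderiv i P) = 0) : eval x P = 0 := by
  have := congrArg (eval x) hP.sum_X_mul_pderiv
  simp only [map_sum, map_mul, hx, mul_zero, Finset.sum_const_zero, map_nsmul] at this
  exact (smul_eq_zero.mp this.symm).resolve_left he

def tjurinaIdeal (g : MvPolynomial σ R) : Ideal (MvPolynomial σ R) :=
  Ideal.span (insert g (Set.range fun j => pderiv j g))

theorem mem_tjurinaIdeal_self (g : MvPolynomial σ R) : g ∈ tjurinaIdeal g :=
  Ideal.subset_span (Set.mem_insert _ _)

theorem pderiv_mem_tjurinaIdeal (g : MvPolynomial σ R) (j : σ) : pderiv j g ∈ tjurinaIdeal g :=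
  Ideal.subset_span (Set.mem_insert_of_mem _ ⟨j, rfl⟩)

variable [Fintype σ]

theorem sum_smul_pderiv_apply (c : σ → MvPolynomial σ R) (P : MvPolynomial σ R) :
    (∑ j, c j • pderiv j) P = ∑ j, c j * pderiv j P := by
  rw [← Derivation.coeFnAddMonoidHom_apply, map_sum, Finset.sum_apply]
  rfl

theorem pderiv_sum_smul_pderiv (c : σ → MvPolynomial σ R) (i : σ) (P : MvPolynomial σ R) :
    pderiv i ((∑ j, c j • pderiv j) P) =
      (∑ j, c j • pderiv j) (pderiv i P) + ∑ j, pderiv i (c j) * pderiv j P := by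
  simp only [sum_smul_pderiv_apply, map_sum, Derivation.leibniz, smul_eq_mul,
    pderiv_pderiv_comm i, ← Finset.sum_add_distrib]
  exact Finset.sum_congr rfl fun j _ => by ring

theorem sum_smul_pderiv_mem_tjurinaIdeal {c : σ → MvPolynomial σ R} {g h : MvPolynomial σ R}
    (hg : (∑ j, c j • pderiv j) g = h * g) {x : MvPolynomial σ R}
    (hx : x ∈ tjurinaIdeal g) : (∑ j, c j • pderiv j) x ∈ tjurinaIdeal g := by
  refine Derivation.map_mem_span_of_forall_mem ?_ hx
  rintro s (rfl | ⟨i, rfl⟩)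
  · exact hg ▸ Ideal.mul_mem_left _ _ (mem_tjurinaIdeal_self _)
  · rw [eq_sub_of_add_eq (pderiv_sum_smul_pderiv c i g).symm, hg, Derivation.leibniz]
    refine Ideal.sub_mem _ (Ideal.add_mem _ ?_ ?_) (Ideal.sum_mem _ fun j _ =>
      Ideal.mul_mem_left _ _ (pderiv_mem_tjurinaIdeal g j))
    · exact Ideal.mul_mem_left _ _ (pderiv_mem_tjurinaIdeal g i)
    · exact Ideal.mul_mem_right _ _ (mem_tjurinaIdeal_self g)

end CommRing

section Field

variable {K σ : Type*} [Field K]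

theorem mem_zeroLocus_tjurinaIdeal_iff {g : MvPolynomial σ K} {y : σ → K} :
    y ∈ zeroLocus K (tjurinaIdeal g) ↔ eval y g = 0 ∧ ∀ j, eval y (pderiv j g) = 0 := by
  simp only [mem_zeroLocus_iff, ← RingHom.mem_ker, tjurinaIdeal,
    ← SetLike.le_def, Ideal.span_le, Set.insert_subset_iff, Set.range_subset_iff]
  rfl

theorem exists_eval_eq_zero_of_notMem {S : Set (σ → K)} (hS : S.Finite) {z : σ → K}
    (hz : z ∉ S) : ∃ Q : MvPolynomial σ K, (∀ q ∈ S, eval q Q = 0) ∧ eval z Q ≠ 0 := by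
  induction S, hS using Set.Finite.induction_on with
  | empty => exact ⟨1, by simp, by simp⟩
  | @insert q S _ _ ih =>
    obtain ⟨Q, hQS, hQz⟩ := ih fun h => hz (Set.mem_insert_of_mem q h)
    obtain ⟨i, hi⟩ := Function.ne_iff.mp fun h : q = z => hz (h ▸ Set.mem_insert q S)
    refine ⟨(X i - C (q i)) * Q, ?_, ?_⟩
    · rintro y (rfl | hy)
      · simp
      · simp [hQS y hy]
    · simpa [sub_eq_zero] using ⟨Ne.symm hi, hQz⟩

theorem _root_.Derivation.eval_map_X_eq_zero_of_finite_zeroLocus [Finite σ] [IsAlgClosed K]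
    [CharZero K] (D : Derivation K (MvPolynomial σ K) (MvPolynomial σ K))
    {I : Ideal (MvPolynomial σ K)} (hI : ∀ x ∈ I, D x ∈ I) (hfin : (zeroLocus K I).Finite)
    {z : σ → K} (hz : z ∈ zeroLocus K I) (i : σ) : eval z (D (X i)) = 0 := by
  obtain ⟨Q, hQ, hQz⟩ := exists_eval_eq_zero_of_notMem (hfin.sdiff (t := {z})) (fun h => h.2 rfl)
  set w := (X i - C (z i)) * Q
  -- `w` vanishes on the zero locus, so `w` and hence `D w` lie in `√I = I(V(I))`.
  have hw : w ∈ I.radical := by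
    rw [← vanishingIdeal_zeroLocus_eq_radical (K := K)]
    intro y hy
    rcases eq_or_ne y z with rfl | hyz
    · simp [w]
    · simp [w, hQ y ⟨hy, hyz⟩]
  have hDw : eval z (D w) = 0 := by
    have := D.map_mem_radical hI hw
    rw [← vanishingIdeal_zeroLocus_eq_radical (K := K)] at this
    exact this z hz
  simpa [w, Derivation.leibniz, derivation_C, hQz] using hDw

end Field

end MvPolynomial

theorem Projectivization.mk_cons_one_injective {K : Type*} [Field K] {n : ℕ} :
    Function.Injective fun y : Fin n → K =>
      Projectivization.mk K (Fin.cons 1 y : Fin (n + 1) → K)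
        (Matrix.cons_nonzero_iff.mpr (.inl one_ne_zero)) := by
  intro y y' h
  obtain ⟨a, ha⟩ := (Projectivization.mk_eq_mk_iff _ _ _ _ _).mp h
  have ha1 : (a : K) = 1 := by simpa [Units.smul_def] using congr_fun ha 0
  funext j
  simpa [Units.smul_def, ha1] using (congr_fun ha j.succ).symm

section Dehomogenization

variable {n : ℕ}

@[simp] theorem deh_X_zero : deh n (X 0) = 1 := by simp [deh]

@[simp] theorem deh_X_succ (j : Fin n) : deh n (X j.succ) = X j := by simp [deh]

@[simp] theorem deh_rename_succ (q : MvPolynomial (Fin n) ℂ) : deh n (rename Fin.succ q) = q := by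
  rw [deh, aeval_rename]
  convert aeval_X_left_apply q
  funext j
  simp

theorem eval_deh (w : Fin n → ℂ) (P : MvPolynomial (Fin (n + 1)) ℂ) :
    eval w (deh n P) = eval (Fin.cons 1 w) P := by
  rw [deh, aeval_eq_bind₁, eval, eval₂Hom_bind₁, eval]
  congr 2
  funext i
  cases i using Fin.cases <;> simp

theorem eval_pt (P : MvPolynomial (Fin (n + 1)) ℂ) : eval (pt n) P = eval 0 (deh n P) := by
  rw [eval_deh]
  congr 2
  funext i
  cases i using Fin.cases <;> simp [pt, Fin.succ_ne_zero]

theorem pderiv_deh (P : MvPolynomial (Fin (n + 1)) ℂ) (j : Fin n) :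
    pderiv j (deh n P) = deh n (pderiv j.succ P) := by
  induction P using MvPolynomial.induction_on with
  | C a => simp [deh]
  | add p q hp hq => simp [hp, hq]
  | mul_X p i ih =>
    simp only [map_mul, Derivation.leibniz, smul_eq_mul, map_add, ih]
    congr 1
    cases i using Fin.cases with
    | zero => simp [pderiv_X_of_ne (Fin.succ_ne_zero j).symm]
    | succ k => simp [pderiv_X, Pi.single_apply, apply_ite (deh n)]

theorem MvPolynomial.IsHomogeneous.eq_zero_of_deh_eq_zero {P : MvPolynomial (Fin (n + 1)) ℂ} {e : ℕ}
    (hP : P.IsHomogeneous e) (h : deh n P = 0) : P = 0 := by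
  -- By homogeneity `P` vanishes off `x₀ = 0`, so `x₀ P` vanishes everywhere.
  have hX : X 0 * P = 0 := by
    refine MvPolynomial.funext fun x => ?_
    rcases eq_or_ne (x 0) 0 with hx | hx
    · simp [hx]
    · have hx' : x = x 0 • Fin.cons 1 ((x 0)⁻¹ • Fin.tail x) := by
        funext i
        cases i using Fin.cases <;> simp [hx, Fin.tail]
      have hPx : eval x P = 0 := by rw [hx', hP.eval_smul, ← eval_deh, h, map_zero, mul_zero]
      simp [hPx]
  simpa [X_ne_zero] using hX

theorem exists_isHomogeneous_deh_eq (q : MvPolynomial (Fin n) ℂ) {M : ℕ}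
    (hM : q.totalDegree ≤ M) :
    ∃ P : MvPolynomial (Fin (n + 1)) ℂ, P.IsHomogeneous M ∧ deh n P = q := by
  refine ⟨∑ k ∈ Finset.range (M + 1),
    X 0 ^ (M - k) * rename Fin.succ (homogeneousComponent k q), ?_, ?_⟩
  · refine IsHomogeneous.sum _ _ _ fun k hk => ?_
    have := (isHomogeneous_X_pow (0 : Fin (n + 1)) (M - k)).mul
      ((homogeneousComponent_isHomogeneous k q).rename_isHomogeneous (f := Fin.succ))
    rwa [Nat.sub_add_cancel (Nat.lt_succ_iff.mp (Finset.mem_range.mp hk))] at this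
  · simp only [map_sum, map_mul, map_pow, deh_X_zero, one_pow, one_mul, deh_rename_succ]
    refine .trans (Finset.sum_subset (Finset.range_subset_range.mpr (by omega))
      fun k _ hk => ?_).symm (sum_homogeneousComponent q)
    exact homogeneousComponent_eq_zero _ _ (by simpa using hk)

theorem deh_sum_mul_pderiv (A : Fin (n + 1) → MvPolynomial (Fin (n + 1)) ℂ)
    (f : MvPolynomial (Fin (n + 1)) ℂ) :
    deh n (∑ i, A i * pderiv i f) =
      deh n (A 0) * deh n (pderiv 0 f) + ∑ j, deh n (A j.succ) * pderiv j (deh n f) := by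
  simp [Fin.sum_univ_succ, pderiv_deh]

theorem deh_pderiv_zero_add_sum {f : MvPolynomial (Fin (n + 1)) ℂ} {d : ℕ}
    (hf : f.IsHomogeneous d) :
    deh n (pderiv 0 f) + ∑ j, X j * pderiv j (deh n f) = d • deh n f := by
  simpa using (deh_sum_mul_pderiv X f).symm.trans (congrArg (deh n) hf.sum_X_mul_pderiv)

end Dehomogenization

section Syzygies

variable {n d : ℕ} {f : MvPolynomial (Fin (n + 1)) ℂ}

/-- The vector field `∑ Aᵢ ∂/∂xᵢ` in the chart `x₀ = 1`: as `yⱼ = xⱼ / x₀`, it acts on `yⱼ` by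
`Aⱼ₊₁ - yⱼ A₀`. -/
def dehDerivation (A : Fin (n + 1) → MvPolynomial (Fin (n + 1)) ℂ) :
    Derivation ℂ (MvPolynomial (Fin n) ℂ) (MvPolynomial (Fin n) ℂ) :=
  ∑ j, (deh n (A j.succ) - X j * deh n (A 0)) • pderiv j

theorem dehDerivation_X (A : Fin (n + 1) → MvPolynomial (Fin (n + 1)) ℂ) (j : Fin n) :
    dehDerivation A (X j) = deh n (A j.succ) - X j * deh n (A 0) := by
  classical
  simp [dehDerivation, sum_smul_pderiv_apply, pderiv_X, Pi.single_apply]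

theorem dehDerivation_deh (hf : f.IsHomogeneous d) {A : Fin (n + 1) → MvPolynomial (Fin (n + 1)) ℂ}
    (hA : ∑ i, A i * pderiv i f = 0) :
    dehDerivation A (deh n f) = -(d • deh n (A 0)) * deh n f := by
  have hsyz := deh_sum_mul_pderiv A f
  rw [hA, map_zero] at hsyz
  have heuler := deh_pderiv_zero_add_sum (n := n) hf
  simp only [dehDerivation, sum_smul_pderiv_apply, sub_mul, Finset.sum_sub_distrib]
  rw [Finset.sum_congr rfl fun j _ => mul_right_comm (X j) (deh n (A 0)) _, ← Finset.sum_mul]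
  linear_combination -hsyz - deh n (A 0) * heuler

theorem saitoQH_of_syzygy (hf : f.IsHomogeneous d) (hd : d ≠ 0)
    {A : Fin (n + 1) → MvPolynomial (Fin (n + 1)) ℂ} (hA : ∑ i, A i * pderiv i f = 0)
    (hA0 : eval (pt n) (A 0) ≠ 0) : SaitoQH (deh n f) := by
  refine ⟨d • deh n (A 0), by rw [map_nsmul, ← eval_pt]; exact smul_ne_zero hd hA0, ?_⟩
  rw [← neg_neg (_ * _), ← neg_mul, ← dehDerivation_deh hf hA, dehDerivation,
    sum_smul_pderiv_apply]
  exact neg_mem (Ideal.sum_mem _ fun j _ => Ideal.mul_mem_left _ _ (Ideal.subset_span ⟨j, rfl⟩))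

theorem exists_forall_isHomogeneous_deh_eq {ι : Type*} [Fintype ι]
    (q : ι → MvPolynomial (Fin n) ℂ) : ∃ (M : ℕ) (P : ι → MvPolynomial (Fin (n + 1)) ℂ),
      ∀ i, (P i).IsHomogeneous M ∧ deh n (P i) = q i := by
  choose P hP using fun i => exists_isHomogeneous_deh_eq (q i)
    (Finset.le_sup (f := fun i => (q i).totalDegree) (Finset.mem_univ i))
  exact ⟨_, P, hP⟩

theorem exists_syzygy_of_saitoQH (hf : f.IsHomogeneous d) (h : SaitoQH (deh n f)) :
    ∃ A : Fin (n + 1) → MvPolynomial (Fin (n + 1)) ℂ,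
      ∑ i, A i * pderiv i f = 0 ∧ eval (pt n) (A 0) ≠ 0 := by
  obtain ⟨u, hu0, hu⟩ := h
  obtain ⟨b, hb⟩ := Ideal.mem_span_range_iff_exists_fun.mp hu
  -- Euler's identity `g₀ + ∑ yⱼ gⱼ = d g` makes `u g₀ + ∑ (u yⱼ - d bⱼ) gⱼ` vanish.
  obtain ⟨M, A, hA⟩ := exists_forall_isHomogeneous_deh_eq
    (Fin.cons u fun j => u * X j - d • b j : Fin (n + 1) → MvPolynomial (Fin n) ℂ)
  refine ⟨A, ?_, by simpa [eval_pt, (hA 0).2] using hu0⟩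
  refine IsHomogeneous.eq_zero_of_deh_eq_zero
    (IsHomogeneous.sum _ _ _ fun i _ => (hA i).1.mul (hf.pderiv (i := i))) ?_
  simp only [deh_sum_mul_pderiv, (hA _).2, Fin.cons_zero, Fin.cons_succ, sub_mul,
    Finset.sum_sub_distrib, mul_assoc, ← Finset.mul_sum, smul_mul_assoc, ← Finset.smul_sum, hb]
  linear_combination u * deh_pderiv_zero_add_sum (n := n) hf

theorem finite_setOf_eval_cons_pderiv_eq_zero (hf : f.IsHomogeneous d)
    (hiso : {P : Projectivization ℂ (Fin (n + 1) → ℂ) |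
      ∀ i, eval P.rep (pderiv i f) = 0}.Finite) :
    {y : Fin n → ℂ | ∀ i, eval (Fin.cons 1 y) (pderiv i f) = 0}.Finite := by
  refine (hiso.preimage Projectivization.mk_cons_one_injective.injOn).subset fun y hy i => ?_
  obtain ⟨a, ha⟩ := Projectivization.exists_smul_eq_mk_rep ℂ (Fin.cons 1 y : Fin (n + 1) → ℂ)
    (Matrix.cons_nonzero_iff.mpr (.inl one_ne_zero))
  simp only [← ha, Units.smul_def, hf.pderiv.eval_smul, hy i, mul_zero]

theorem ne_zero_of_finite_setOf_eval_cons_pderiv_eq_zero (hn : 0 < n) (hf : f.IsHomogeneous d)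
    (hfin : {y : Fin n → ℂ | ∀ i, eval (Fin.cons 1 y) (pderiv i f) = 0}.Finite) : d ≠ 0 := by
  rintro rfl
  have : Nonempty (Fin n) := ⟨⟨0, hn⟩⟩
  rw [totalDegree_eq_zero_iff_eq_C.mp ((totalDegree_zero_iff_isHomogeneous _).mpr hf)] at hfin
  exact Set.infinite_univ (by simpa using hfin)

theorem eval_pt_succ_eq_zero_of_syzygy (hf : f.IsHomogeneous d) (hd : d ≠ 0)
    (hfin : {y : Fin n → ℂ | ∀ i, eval (Fin.cons 1 y) (pderiv i f) = 0}.Finite)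
    (hsing : ∀ i, eval (pt n) (pderiv i f) = 0)
    {A : Fin (n + 1) → MvPolynomial (Fin (n + 1)) ℂ} (hA : ∑ i, A i * pderiv i f = 0)
    (j : Fin n) : eval (pt n) (A j.succ) = 0 := by
  have heuler (y : Fin n → ℂ) := congrArg (eval y) (deh_pderiv_zero_add_sum (n := n) hf)
  have hZ : zeroLocus ℂ (tjurinaIdeal (deh n f)) ⊆
      {y | ∀ i, eval (Fin.cons 1 y) (pderiv i f) = 0} := by
    intro y hy i
    obtain ⟨hg, hgj⟩ := mem_zeroLocus_tjurinaIdeal_iff.mp hy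
    cases i using Fin.cases with
    | zero => simpa [eval_deh, hg, hgj] using heuler y
    | succ j => simpa [eval_deh, pderiv_deh] using hgj j
  have h0 : (0 : Fin n → ℂ) ∈ zeroLocus ℂ (tjurinaIdeal (deh n f)) := by
    refine mem_zeroLocus_tjurinaIdeal_iff.mpr ⟨?_, fun j => ?_⟩
    · rw [← eval_pt]
      exact hf.eval_eq_zero_of_forall_eval_pderiv_eq_zero hd hsing
    · rw [pderiv_deh, ← eval_pt]
      exact hsing _
  have := (dehDerivation A).eval_map_X_eq_zero_of_finite_zeroLocus
    (fun _ => sum_smul_pderiv_mem_tjurinaIdeal (dehDerivation_deh hf hA)) (hfin.subset hZ) h0 j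
  simpa [dehDerivation_X, eval_pt] using this

end Syzygies

/-- Theorem 3.3 / Corollary 3.4: with `ρ₁,…,ρ_m` generators of the module `Syz(J_f)` of Jacobian
syzygies (the columns of a first syzygy matrix `M_f`), the singular point `p = (1:0:⋯:0)` of the
hypersurface `V(f)` (with only isolated singularities) is quasi-homogeneous (Saito's condition
for `g = f(1,y)`) iff the evaluated matrix `M_f(p)` is nonzero, i.e. some entry `ρⱼ` has a
component not vanishing at `p`. -/
theorem stmt_1 (n d m : ℕ) (hn : 2 ≤ n) (f : MvPolynomial (Fin (n + 1)) ℂ)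
    (hf : f.IsHomogeneous d)
    (hiso : {P : Projectivization ℂ (Fin (n + 1) → ℂ) |
      ∀ i, eval P.rep (pderiv i f) = 0}.Finite)
    (hsing : ∀ i, eval (pt n) (pderiv i f) = 0)
    (ρ : Fin m → Fin (n + 1) → MvPolynomial (Fin (n + 1)) ℂ)
    (hsyz : ∀ j, ∑ i, ρ j i * pderiv i f = 0)
    (hgen : ∀ A : Fin (n + 1) → MvPolynomial (Fin (n + 1)) ℂ,
      (∑ i, A i * pderiv i f = 0) →
        A ∈ Submodule.span (MvPolynomial (Fin (n + 1)) ℂ) (Set.range ρ)) :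
    SaitoQH (deh n f) ↔ ∃ j k, eval (pt n) (ρ j k) ≠ 0 := by
  have hfin := finite_setOf_eval_cons_pderiv_eq_zero hf hiso
  have hd := ne_zero_of_finite_setOf_eval_cons_pderiv_eq_zero (by omega) hf hfin
  constructor
  · intro h
    obtain ⟨A, hA, hA0⟩ := exists_syzygy_of_saitoQH hf h
    obtain ⟨c, rfl⟩ := (Submodule.mem_span_range_iff_exists_fun _).mp (hgen A hA)
    by_contra! hρ
    simp [hρ] at hA0
  · rintro ⟨j, k, hk⟩
    cases k using Fin.cases with
    | zero => exact saitoQH_of_syzygy hf hd (hsyz j) hk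
    | succ k => exact absurd (eval_pt_succ_eq_zero_of_syzygy hf hd hfin hsing (hsyz j) k) hk
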